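/- Define T : [0,2] → 2^{[0,4)} by T(x) = [0,1] for x ∈ [0,1), T(1) = ∅, and T(x) = (2,3) for x ∈ (1,2], and let D = [1,2]. Then T is lower semicontinuous on [0,2], but for V = (−ε, ε) with ε ∈ (0, 1/2), the closure-of-graph correspondence of T^V(x) = (T(x)+V) ∩ D takes at x = 1 the value [1, 1+ε] ∪ [2−ε, 2], which is not convex. Hence (T^V)‾ need not have convex values even though T^V has convex values. -/

import Mathlib

open Pointwise

/-- Lower semicontinuity of a correspondence on a subset `A` of its domain. -/
def LSCOn {X Y : Type*} [TopologicalSpace X] [TopologicalSpace Y]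
    (T : X → Set Y) (A : Set X) : Prop :=
  ∀ x ∈ A, ∀ V : Set Y, IsOpen V → (T x ∩ V).Nonempty →
    ∃ U : Set X, IsOpen U ∧ x ∈ U ∧ ∀ y ∈ U ∩ A, (T y ∩ V).Nonempty

/-- Closure-of-graph correspondence of `T` regarded as defined on `A`. -/
def gclosOn {X Y : Type*} [TopologicalSpace X] [TopologicalSpace Y]
    (T : X → Set Y) (A : Set X) (x : X) : Set Y :=
  {y | (x, y) ∈ closure {p : X × Y | p.1 ∈ A ∧ p.2 ∈ T p.1}}

noncomputable def Tc : ℝ → Set ℝ := fun x =>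
  if x < 1 then Set.Icc 0 1 else if x = 1 then ∅ else Set.Ioo 2 3

noncomputable def TcV (ε : ℝ) : ℝ → Set ℝ :=
  fun x => (Tc x + Set.Ioo (-ε) ε) ∩ Set.Icc 1 2

/-!
Away from `x = 1` the correspondence `T` is locally constant, and at `x = 1` it is empty, so it
is lower semicontinuous. Near `x = 1` the graph of `T^V` contains the boxes
`[0, 1) × [1, 1 + ε)` and `(1, 2] × (2 - ε, 2]`, whose closures contribute both pieces
`[1, 1 + ε]` and `[2 - ε, 2]` over `x = 1`; conversely every value of `T^V` lies in their union,
a closed set. The gap `(1 + ε, 2 - ε)` is nonempty because `ε < 1/2`.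
-/

open Set

section Correspondence

variable {X Y : Type*} [TopologicalSpace X] [TopologicalSpace Y] {T : X → Set Y} {A : Set X}

theorem lscOn_of_forall_exists_isOpen_subset
    (h : ∀ x ∈ A, (T x).Nonempty → ∃ U, IsOpen U ∧ x ∈ U ∧ ∀ y ∈ U ∩ A, T x ⊆ T y) :
    LSCOn T A := by
  rintro x hx V - ⟨z, hzT, hzV⟩
  obtain ⟨U, hU, hxU, hTU⟩ := h x hx ⟨z, hzT⟩
  exact ⟨U, hU, hxU, fun y hy => ⟨z, hTU y hy hzT, hzV⟩⟩

theorem gclosOn_subset_of_isClosed {C : Set Y} (hC : IsClosed C) (hT : ∀ x ∈ A, T x ⊆ C)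
    (x : X) : gclosOn T A x ⊆ C := fun _ hy =>
  closure_minimal (fun p hp => hT p.1 hp.1 hp.2 : _ ⊆ Prod.snd ⁻¹' C)
    (hC.preimage continuous_snd) hy

theorem closure_subset_gclosOn {s : Set X} {t : Set Y} (hst : ∀ x ∈ s, x ∈ A ∧ t ⊆ T x)
    {x : X} (hx : x ∈ closure s) : closure t ⊆ gclosOn T A x := fun _ hy =>
  closure_mono (fun p hp => ⟨(hst p.1 hp.1).1, (hst p.1 hp.1).2 hp.2⟩ :
      s ×ˢ t ⊆ {p : X × Y | p.1 ∈ A ∧ p.2 ∈ T p.1})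
    (by rw [closure_prod_eq]; exact ⟨hx, hy⟩)

end Correspondence

theorem not_convex_Icc_union_Icc {𝕜 : Type*} [Field 𝕜] [LinearOrder 𝕜] [IsStrictOrderedRing 𝕜]
    {a b c d : 𝕜} (hab : a ≤ b) (hbc : b < c) (hcd : c ≤ d) :
    ¬ Convex 𝕜 (Icc a b ∪ Icc c d) := by
  intro h
  obtain ⟨m, hbm, hmc⟩ := exists_between hbc
  rcases h.ordConnected.out (Or.inl ⟨hab, le_rfl⟩) (Or.inr ⟨le_rfl, hcd⟩) ⟨hbm.le, hmc.le⟩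
    with hm | hm
  · exact hbm.not_ge hm.2
  · exact hmc.not_ge hm.1

theorem Tc_of_lt_one {x : ℝ} (hx : x < 1) : Tc x = Icc 0 1 := if_pos hx

theorem Tc_one : Tc 1 = ∅ := by simp [Tc]

theorem Tc_of_one_lt {x : ℝ} (hx : 1 < x) : Tc x = Ioo 2 3 := by
  simp [Tc, hx.not_gt, hx.ne']

theorem lscOn_Tc : LSCOn Tc (Icc 0 2) := by
  refine lscOn_of_forall_exists_isOpen_subset fun x _ hne => ?_
  rcases lt_trichotomy x 1 with h | rfl | h
  · refine ⟨Iio 1, isOpen_Iio, h, fun y hy => ?_⟩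
    rw [Tc_of_lt_one h, Tc_of_lt_one hy.1]
  · simp [Tc_one] at hne
  · refine ⟨Ioi 1, isOpen_Ioi, h, fun y hy => ?_⟩
    rw [Tc_of_one_lt h, Tc_of_one_lt hy.1]

theorem convex_Tc (x : ℝ) : Convex ℝ (Tc x) := by
  unfold Tc
  split_ifs
  exacts [convex_Icc 0 1, convex_empty, convex_Ioo 2 3]

theorem convex_TcV (ε x : ℝ) : Convex ℝ (TcV ε x) :=
  ((convex_Tc x).add (convex_Ioo _ _)).inter (convex_Icc 1 2)

theorem TcV_subset (ε x : ℝ) : TcV ε x ⊆ Icc 1 (1 + ε) ∪ Icc (2 - ε) 2 := by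
  rintro y ⟨hy, hy1, hy2⟩
  rcases lt_trichotomy x 1 with h | rfl | h
  · rw [Tc_of_lt_one h] at hy
    have := Icc_add_Icc_subset _ _ _ _ (add_subset_add_left Ioo_subset_Icc_self hy)
    exact Or.inl ⟨hy1, this.2⟩
  · simp [Tc_one] at hy
  · rw [Tc_of_one_lt h] at hy
    have := Icc_add_Icc_subset _ _ _ _
      (add_subset_add Ioo_subset_Icc_self Ioo_subset_Icc_self hy)
    exact Or.inr ⟨by linarith [this.1], hy2⟩

theorem Ico_subset_TcV {ε x : ℝ} (hε : 0 < ε) (hε1 : ε ≤ 1) (hx : x < 1) :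
    Ico 1 (1 + ε) ⊆ TcV ε x := by
  rintro y ⟨hy1, hy2⟩
  refine ⟨?_, hy1, by linarith⟩
  rw [Tc_of_lt_one hx]
  exact ⟨1, right_mem_Icc.2 zero_le_one, y - 1, ⟨by linarith, by linarith⟩, by ring⟩

theorem Ioc_subset_TcV {ε x : ℝ} (hε : 0 < ε) (hε1 : ε ≤ 1) (hx : 1 < x) :
    Ioc (2 - ε) 2 ⊆ TcV ε x := by
  rintro y ⟨hy1, hy2⟩
  refine ⟨?_, by linarith, hy2⟩
  rw [Tc_of_one_lt hx]
  -- split `y` at the midpoint of `2` and `y + ε`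
  exact ⟨(2 + y + ε) / 2, ⟨by linarith, by linarith⟩, (y - 2 - ε) / 2,
    ⟨by linarith, by linarith⟩, by ring⟩

theorem gclosOn_TcV_one {ε : ℝ} (hε : 0 < ε) (hε1 : ε ≤ 1) :
    gclosOn (TcV ε) (Icc 0 2) 1 = Icc 1 (1 + ε) ∪ Icc (2 - ε) 2 := by
  refine (gclosOn_subset_of_isClosed (isClosed_Icc.union isClosed_Icc)
    (fun x _ => TcV_subset ε x) 1).antisymm (union_subset ?_ ?_)
  · have h1 : (1 : ℝ) ∈ closure (Ico 0 1) := by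
      rw [closure_Ico zero_ne_one]
      exact right_mem_Icc.2 zero_le_one
    rw [← closure_Ico (by linarith : (1 : ℝ) ≠ 1 + ε)]
    exact closure_subset_gclosOn (A := Icc 0 2)
      (fun x hx => ⟨⟨hx.1, by linarith [hx.2]⟩, Ico_subset_TcV hε hε1 hx.2⟩) h1
  · have h1 : (1 : ℝ) ∈ closure (Ioc 1 2) := by
      rw [closure_Ioc one_lt_two.ne]
      exact left_mem_Icc.2 one_le_two
    rw [← closure_Ioc (by linarith : 2 - ε ≠ 2)]
    exact closure_subset_gclosOn (A := Icc 0 2)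
      (fun x hx => ⟨⟨by linarith [hx.1], hx.2⟩, Ioc_subset_TcV hε hε1 hx.1⟩) h1

theorem stmt9 :
    LSCOn Tc (Set.Icc (0 : ℝ) 2) ∧
    (∀ ε : ℝ, ∀ x : ℝ, Convex ℝ (TcV ε x)) ∧
    (∀ ε ∈ Set.Ioo (0 : ℝ) (1/2),
      gclosOn (TcV ε) (Set.Icc (0 : ℝ) 2) 1 =
        Set.Icc 1 (1 + ε) ∪ Set.Icc (2 - ε) 2 ∧
      ¬ Convex ℝ (gclosOn (TcV ε) (Set.Icc (0 : ℝ) 2) 1)) := by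
  refine ⟨lscOn_Tc, convex_TcV, fun ε ⟨hε, hε2⟩ => ?_⟩
  rw [gclosOn_TcV_one hε (by linarith)]
  exact ⟨rfl, not_convex_Icc_union_Icc (by linarith) (by linarith) (by linarith)⟩
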